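/- arXiv:2206.13250 — 4 statements merged into one kernel-verified Lean document; each statement's English description precedes it below -/
import Mathlib

section
/- Define φ(s) = q⁺ · ⌈s⌉⁺ + q⁻ · ⌊s⌋⁻, where ⌈s⌉⁺ = max{⌈s⌉, 0} and ⌊s⌋⁻ = max{-⌊s⌋, 0}, for nonnegative reals q⁺, q⁻. Then for all s ∈ ℝ, ∫_{s-1/2}^{s+1/2} φ(t) dt = q⁺ · max{s + 1/2, 0} + q⁻ · max{-(s - 1/2), 0}. -/
/-!
On a unit interval `(a, a + 1]` the ceiling takes only the two values `⌈a⌉` and `⌈a⌉ + 1`,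
so `∫ t in a..a+1, g ⌈t⌉` is a convex combination of `g ⌈a⌉` and `g (⌈a⌉ + 1)`. For
`g n = max n 0` both values lie on the same affine branch of `max · 0`, which gives
`max (a + 1) 0`. The floor term reduces to the ceiling term through `-⌊t⌋ = ⌈-t⌉` and the
reflection `t ↦ -t`.
-/

open MeasureTheory intervalIntegral Set

theorem intervalIntegrable_of_eqOn_Ioc_const {f : ℝ → ℝ} {a b c : ℝ} (hab : a ≤ b)
    (hf : EqOn f (fun _ => c) (Ioc a b)) : IntervalIntegrable f volume a b :=
  (intervalIntegrable_iff_integrableOn_Ioc_of_le hab).2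
    ((integrableOn_const (by simp)).congr_fun hf.symm measurableSet_Ioc)

theorem integral_of_eqOn_Ioc_const {f : ℝ → ℝ} {a b c : ℝ} (hab : a ≤ b)
    (hf : EqOn f (fun _ => c) (Ioc a b)) : ∫ t in a..b, f t = (b - a) * c := by
  rw [integral_of_le hab, setIntegral_congr_fun measurableSet_Ioc hf, setIntegral_const,
    Real.volume_real_Ioc_of_le hab, smul_eq_mul]

theorem integral_comp_ceil_self_add_one (g : ℤ → ℝ) (a : ℝ) :
    ∫ t in a..a + 1, g ⌈t⌉ = (⌈a⌉ - a) * g ⌈a⌉ + (a + 1 - ⌈a⌉) * g (⌈a⌉ + 1) := by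
  have ha : a ≤ ⌈a⌉ := Int.le_ceil a
  have ha' : (⌈a⌉ : ℝ) ≤ a + 1 := (Int.ceil_lt_add_one a).le
  have hlow : EqOn (fun t => g ⌈t⌉) (fun _ => g ⌈a⌉) (Ioc a ⌈a⌉) := fun t ht => by
    dsimp only
    rw [Int.ceil_eq_on_Ioc ⌈a⌉ t ⟨by linarith [ht.1], ht.2⟩]
  have hhigh : EqOn (fun t => g ⌈t⌉) (fun _ => g (⌈a⌉ + 1)) (Ioc (⌈a⌉ : ℝ) (a + 1)) :=
    fun t ht => by
      dsimp only
      rw [Int.ceil_eq_on_Ioc (⌈a⌉ + 1) t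
        ⟨by push_cast; linarith [ht.1], by push_cast; linarith [ht.2]⟩]
  rw [← integral_add_adjacent_intervals (intervalIntegrable_of_eqOn_Ioc_const ha hlow)
    (intervalIntegrable_of_eqOn_Ioc_const ha' hhigh), integral_of_eqOn_Ioc_const ha hlow,
    integral_of_eqOn_Ioc_const ha' hhigh]

theorem integral_max_ceil_zero (a : ℝ) :
    ∫ t in a..a + 1, max (⌈t⌉ : ℝ) 0 = max (a + 1) 0 := by
  rw [integral_comp_ceil_self_add_one (fun n => max (n : ℝ) 0), Int.cast_add, Int.cast_one]
  have ha : a ≤ ⌈a⌉ := Int.le_ceil a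
  have ha' : (⌈a⌉ : ℝ) < a + 1 := Int.ceil_lt_add_one a
  rcases le_or_gt 0 ⌈a⌉ with h | h
  · have h : (0 : ℝ) ≤ ⌈a⌉ := by exact_mod_cast h
    rw [max_eq_left h, max_eq_left (by linarith), max_eq_left (by linarith)]
    ring
  · have h : (⌈a⌉ : ℝ) + 1 ≤ 0 := by exact_mod_cast h
    rw [max_eq_right (by linarith), max_eq_right h, max_eq_right (by linarith)]
    ring

theorem integral_max_neg_floor_zero (a : ℝ) :
    ∫ t in a..a + 1, max (-(⌊t⌋ : ℝ)) 0 = max (-a) 0 := by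
  simp_rw [← Int.cast_neg, ← Int.ceil_neg]
  rw [integral_comp_neg (fun u => max (⌈u⌉ : ℝ) 0), show -a = -(a + 1) + 1 by ring,
    integral_max_ceil_zero]

theorem monotone_max_ceil_zero : Monotone fun t : ℝ => max (⌈t⌉ : ℝ) 0 :=
  fun _ _ h => max_le_max_right 0 (Int.cast_mono (Int.ceil_mono h))

theorem antitone_max_neg_floor_zero : Antitone fun t : ℝ => max (-(⌊t⌋ : ℝ)) 0 :=
  fun _ _ h => max_le_max_right 0 (neg_le_neg (Int.cast_mono (Int.floor_mono h)))

theorem uima_sir_value_function_general (qp qm : ℝ) (s : ℝ) :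
    (∫ t in (s - 1/2)..(s + 1/2),
        (qp * max (⌈t⌉ : ℝ) 0 + qm * max (-(⌊t⌋ : ℝ)) 0))
      = qp * max (s + 1/2) 0 + qm * max (-(s - 1/2)) 0 := by
  have hs : s + 1/2 = s - 1/2 + 1 := by ring
  rw [integral_add (monotone_max_ceil_zero.intervalIntegrable.const_mul qp)
      (antitone_max_neg_floor_zero.intervalIntegrable.const_mul qm),
    intervalIntegral.integral_const_mul, intervalIntegral.integral_const_mul, hs,
    integral_max_ceil_zero, integral_max_neg_floor_zero]

/-- UIMA transform of the one-dimensional SIR value function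
`φ(s) = q⁺⌈s⌉⁺ + q⁻⌊s⌋⁻`. -/
theorem uima_sir_value_function (qp qm : ℝ) (hqp : 0 ≤ qp) (hqm : 0 ≤ qm) (s : ℝ) :
    (∫ t in (s - 1/2)..(s + 1/2),
        (qp * max (⌈t⌉ : ℝ) 0 + qm * max (-(⌊t⌋ : ℝ)) 0))
      = qp * max (s + 1/2) 0 + qm * max (-(s - 1/2)) 0 :=
  uima_sir_value_function_general qp qm s
end

section
/- Let P̄ be a probability measure on ℝ with cdf F̄, and let P be the probability measure with cdf F = γ(F̄), where γ(F̄)(s) = ∫_{s-1/2}^{s+1/2} F̄(t) dt. Then P has density f(t) = F̄(t + 1/2) - F̄(t - 1/2) with respect to Lebesgue measure. -/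
/-!
By hypothesis the cdf of `P` is `G s = ∫_{s-1/2}^{s+1/2} F̄`. Shifting the two halves of
`∫_a^b (F̄(t + 1/2) - F̄(t - 1/2)) dt` and cancelling the common piece `∫_{a+1/2}^{b-1/2} F̄`
gives `G b - G a = P (a, b]`; two finite measures on `ℝ` agreeing on all intervals `(a, b]`
are equal.
-/

open MeasureTheory ProbabilityTheory Set

lemma intervalIntegral.integral_comp_add_sub_comp_sub {F : ℝ → ℝ}
    (hF : ∀ a b, IntervalIntegrable F volume a b) (h a b : ℝ) :
    ∫ t in a..b, (F (t + h) - F (t - h)) =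
      (∫ t in (b - h)..(b + h), F t) - ∫ t in (a - h)..(a + h), F t := by
  have hshift : ∀ c, IntervalIntegrable (fun t => F (t + c)) volume a b := fun c => by
    simpa using (hF (a + c) (b + c)).comp_add_right c
  rw [integral_sub (hshift h) (by simpa only [sub_eq_add_neg] using hshift (-h)),
    integral_comp_add_right, integral_comp_sub_right,
    ← integral_add_adjacent_intervals (hF (a + h) (b - h)) (hF (b - h) (b + h)),
    ← integral_add_adjacent_intervals (hF (a - h) (a + h)) (hF (a + h) (b - h))]
  ring

lemma ProbabilityTheory.measure_Ioc_eq_ofReal_cdf_sub (μ : Measure ℝ) [IsProbabilityMeasure μ]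
    (a b : ℝ) : μ (Ioc a b) = ENNReal.ofReal (cdf μ b - cdf μ a) := by
  conv_lhs => rw [← measure_cdf μ]
  exact (cdf μ).measure_Ioc a b

lemma MeasureTheory.withDensity_ofReal_Ioc {μ : Measure ℝ} {f : ℝ → ℝ} {a b : ℝ} (hab : a ≤ b)
    (hf : IntervalIntegrable f μ a b) (hf_nonneg : ∀ t, 0 ≤ f t) :
    μ.withDensity (fun t => ENNReal.ofReal (f t)) (Ioc a b) =
      ENNReal.ofReal (∫ t in a..b, f t ∂μ) := by
  rw [withDensity_apply _ measurableSet_Ioc, intervalIntegral.integral_of_le hab,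
    ofReal_integral_eq_lintegral_ofReal ((intervalIntegrable_iff_integrableOn_Ioc_of_le hab).1 hf)
      (Filter.Eventually.of_forall hf_nonneg)]

/-- If the cdf of `P` is the UIMA transform of the cdf of `P̄`, then
`P` has density `t ↦ F̄(t+1/2) - F̄(t-1/2)` with respect to Lebesgue measure. -/
theorem uima_measure_density (Pb P : Measure ℝ)
    [IsProbabilityMeasure Pb] [IsProbabilityMeasure P]
    (Fb : ℝ → ℝ) (hFb : ∀ s, Fb s = (Pb (Set.Iic s)).toReal)
    (hF : ∀ s, (P (Set.Iic s)).toReal = ∫ t in (s - 1/2)..(s + 1/2), Fb t) :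
    P = volume.withDensity (fun t => ENNReal.ofReal (Fb (t + 1/2) - Fb (t - 1/2))) := by
  have hFb_cdf : Fb = cdf Pb := funext fun s => (hFb s).trans (cdf_eq_real Pb s).symm
  have hFb_mono : Monotone Fb := hFb_cdf ▸ (cdf Pb).mono
  have hFb_int : ∀ a b, IntervalIntegrable Fb volume a b := fun _ _ =>
    hFb_mono.intervalIntegrable
  have hP_cdf : ∀ s, cdf P s = ∫ t in (s - 1/2)..(s + 1/2), Fb t := fun s =>
    (cdf_eq_real P s).trans (hF s)
  have hf_int : ∀ a b, IntervalIntegrable (fun t => Fb (t + 1/2) - Fb (t - 1/2)) volume a b :=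
    fun _ _ => (hFb_mono.comp (monotone_id.add_const _)).intervalIntegrable.sub
      (hFb_mono.comp fun _ _ h => sub_le_sub_right h _).intervalIntegrable
  refine Measure.ext_of_Ioc' _ _ (fun _ _ _ => measure_ne_top _ _) fun a b hab => ?_
  rw [withDensity_ofReal_Ioc hab.le (hf_int a b) fun t => sub_nonneg.2 (hFb_mono (by linarith)),
    intervalIntegral.integral_comp_add_sub_comp_sub hFb_int, ← hP_cdf, ← hP_cdf,
    measure_Ioc_eq_ofReal_cdf_sub]
end

section
/- Let ξ be a real random variable whose distribution is γ(P̄) for some probability measure P̄ on ℝ (i.e., its cdf is the unit interval moving average of the cdf of P̄). Then the fractional part ξ - ⌊ξ⌋ is uniformly distributed on [0,1). -/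
/-!
The moving average `γ(F̄)(s) = ∫_{s-1/2}^{s+1/2} F̄` is the cdf of `P̄ ∗ U`, where `U` is the
uniform distribution on `(-1/2, 1/2]`; since a measure on `ℝ` is determined by its cdf, `ξ` has
the law of `η + U` with `η ~ P̄` independent of `U`. For each fixed value `y` of `η`, the point
`y + U` is uniform on the circle `ℝ/ℤ` by translation invariance of its Haar measure, so
`Int.fract (y + U)` is uniform on `[0,1)`; averaging over `y` keeps it uniform.
-/

open MeasureTheory Measure Set

theorem map_fract_volume_Ioc_zero_one :
    (volume.restrict (Ioc (0 : ℝ) 1)).map Int.fract = volume.restrict (Ico 0 1) := by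
  rw [← restrict_congr_set Ico_ae_eq_Ioc]
  refine (map_congr ((ae_restrict_mem measurableSet_Ico).mono fun u hu => ?_)).trans map_id
  exact Int.fract_eq_self.2 hu

theorem map_fract_add_volume_Ioc (a y : ℝ) :
    (volume.restrict (Ioc a (a + 1))).map (fun u => Int.fract (y + u)) =
      volume.restrict (Ico 0 1) := by
  set g : AddCircle (1 : ℝ) → ℝ := fun z => (AddCircle.equivIco 1 0 z : ℝ)
  have hg : Measurable g :=
    measurable_subtype_coe.comp (AddCircle.measurableEquivIco 1 0).measurable
  have hfract (u : ℝ) : Int.fract u = g u := by simp [g]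
  calc (volume.restrict (Ioc a (a + 1))).map (fun u => Int.fract (y + u))
      = ((volume.restrict (Ioc a (a + 1))).map ((↑) : ℝ → AddCircle (1 : ℝ))).map
          (g ∘ ((y : AddCircle (1 : ℝ)) + ·)) := by
        rw [map_map (hg.comp (measurable_const_add _)) AddCircle.measurable_mk']
        congr 1
        funext u
        simp [hfract]
    _ = ((volume : Measure (AddCircle (1 : ℝ))).map ((y : AddCircle (1 : ℝ)) + ·)).map g := by
        rw [(AddCircle.measurePreserving_mk 1 a).map_eq, map_map hg (measurable_const_add _)]
    _ = ((volume.restrict (Ioc 0 (0 + 1))).map ((↑) : ℝ → AddCircle (1 : ℝ))).map g := by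
        rw [map_add_left_eq_self, (AddCircle.measurePreserving_mk 1 0).map_eq]
    _ = volume.restrict (Ico 0 1) := by
        rw [map_map hg AddCircle.measurable_mk', zero_add, ← map_fract_volume_Ioc_zero_one]
        congr 1
        funext u
        simp [hfract]

theorem map_fract_conv_volume_Ioc (μ : Measure ℝ) [IsProbabilityMeasure μ] (a : ℝ) :
    (μ ∗ volume.restrict (Ioc a (a + 1))).map Int.fract = volume.restrict (Ico 0 1) := by
  ext S hS
  have hfract_add : Measurable (Int.fract ∘ fun p : ℝ × ℝ => p.1 + p.2) :=
    measurable_fract.comp measurable_add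
  have hfiber (y : ℝ) : volume.restrict (Ioc a (a + 1))
      (Prod.mk y ⁻¹' ((Int.fract ∘ fun p : ℝ × ℝ => p.1 + p.2) ⁻¹' S)) =
        volume.restrict (Ico 0 1) S := by
    rw [← map_fract_add_volume_Ioc a y, map_apply (by fun_prop) hS]
    rfl
  rw [conv, map_map measurable_fract measurable_add, map_apply hfract_add hS,
    prod_apply (hfract_add hS)]
  simp [hfiber]

theorem conv_volume_Ioc_apply_Iic (μ : Measure ℝ) [IsFiniteMeasure μ] {a b : ℝ} (hab : a ≤ b)
    (s : ℝ) :
    (μ ∗ volume.restrict (Ioc a b)) (Iic s) =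
      ENNReal.ofReal (∫ t in (s - b)..(s - a), (μ (Iic t)).toReal) := by
  have hcdf : Monotone fun t => (μ (Iic t)).toReal := fun u v huv =>
    ENNReal.toReal_mono (measure_ne_top μ _) (measure_mono (Iic_subset_Iic.2 huv))
  rw [conv, map_apply measurable_add measurableSet_Iic,
    prod_apply_symm (measurable_add measurableSet_Iic), ← intervalIntegral.integral_comp_sub_left,
    intervalIntegral.integral_of_le hab, ofReal_integral_eq_lintegral_ofReal]
  · congr 1
    funext u
    rw [ENNReal.ofReal_toReal (measure_ne_top μ _)]
    congr 1
    ext x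
    simp [le_sub_iff_add_le]
  · exact (hcdf.comp_antitone fun u v h => sub_le_sub_left h s).intervalIntegrable.1
  · exact Filter.Eventually.of_forall fun u => ENNReal.toReal_nonneg

/-- If `ξ ~ P = γ(P̄)` (the cdf of `P` is the UIMA transform of the
cdf of `P̄`), then the fractional part `ξ - ⌊ξ⌋` is uniform on `[0,1)`. -/
theorem uima_fract_uniform (Pb P : Measure ℝ)
    [IsProbabilityMeasure Pb] [IsProbabilityMeasure P]
    (hF : ∀ s, (P (Set.Iic s)).toReal
      = ∫ t in (s - 1/2)..(s + 1/2), (Pb (Set.Iic t)).toReal) :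
    P.map Int.fract = volume.restrict (Set.Ico (0 : ℝ) 1) := by
  have hP : P = Pb ∗ volume.restrict (Ioc (-1/2) (-1/2 + 1)) := by
    refine ext_of_Iic _ _ fun s => ?_
    rw [conv_volume_Ioc_apply_Iic Pb (by norm_num) s, ← ENNReal.ofReal_toReal (measure_ne_top P _),
      hF s]
    norm_num [sub_eq_add_neg]
  rw [hP, map_fract_conv_volume_Ioc]
end

section
/- Let g : ℝ → ℝ be measurable with sup_s |g(s)|/(1+|s|) < ∞, and let P̄ be a probability measure on ℝ with finite first moment. Let P = γ(P̄) be the probability measure whose cdf is the UIMA transform of the cdf of P̄. Then E^P[g(ξ)] = E^P̄[γ(g)(ξ)], where γ(g)(s) = ∫_{s-1/2}^{s+1/2} g(t) dt. -/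
/-! The cdf identity says that `P` is the law of `ξ + U`, with `ξ ∼ P̄` and `U` uniform on
`(-1/2, 1/2]` independent of it: by Fubini the cdf of the convolution `P̄ ∗ U` at `s` is
`∫_{-1/2}^{1/2} F̄(s - u) du = γ(F̄)(s)`, and a measure on `ℝ` is determined by its cdf.
Fubini once more gives `E[g(ξ + U)] = E[γ(g)(ξ)]`; linear growth of `g` together with the finite
first moments of `ξ` and `U` makes `g(ξ + U)` integrable. -/

open MeasureTheory Set

namespace MeasureTheory

variable {μ ν : Measure ℝ} {a b : ℝ}

lemma Integrable.of_abs_le_mul_one_add_abs [IsFiniteMeasure μ] {g : ℝ → ℝ} {C : ℝ}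
    (hg : AEStronglyMeasurable g μ) (hgrowth : ∀ s, |g s| ≤ C * (1 + |s|))
    (hμ : Integrable (fun x : ℝ => x) μ) : Integrable g μ :=
  (((integrable_const 1).add hμ.abs).const_mul C).mono' hg (ae_of_all _ hgrowth)

lemma integrable_id_conv [IsFiniteMeasure μ] [IsFiniteMeasure ν]
    (hμ : Integrable (fun x : ℝ => x) μ) (hν : Integrable (fun x : ℝ => x) ν) :
    Integrable (fun x : ℝ => x) (μ ∗ ν) := by
  rw [Measure.conv, integrable_map_measure (by fun_prop) (by fun_prop)]
  exact (hμ.comp_fst ν).add (hν.comp_snd μ)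

lemma integrable_id_restrict_Ioc : Integrable (fun x : ℝ => x) (volume.restrict (Ioc a b)) :=
  continuous_id.integrableOn_Ioc

lemma measureReal_conv_restrict_Ioc_Iic [IsFiniteMeasure μ] (hab : a ≤ b) (s : ℝ) :
    (μ ∗ volume.restrict (Ioc a b)).real (Iic s) = ∫ t in (s - b)..(s - a), μ.real (Iic t) := by
  have hpre : ∀ u : ℝ, (fun x => (x, u)) ⁻¹' ((fun p : ℝ × ℝ => p.1 + p.2) ⁻¹' Iic s)
      = Iic (s - u) := fun u => by ext x; simp [le_sub_iff_add_le]
  have hanti : Antitone fun u => μ (Iic (s - u)) := fun u v huv =>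
    measure_mono (Iic_subset_Iic.2 (by linarith))
  rw [Measure.conv, measureReal_def, Measure.map_apply (by fun_prop) measurableSet_Iic,
    Measure.prod_apply_symm (measurableSet_Iic.preimage (by fun_prop))]
  simp_rw [hpre]
  rw [← integral_toReal hanti.measurable.aemeasurable (ae_of_all _ fun _ => measure_lt_top _ _),
    ← intervalIntegral.integral_of_le hab]
  exact intervalIntegral.integral_comp_sub_left (fun t => μ.real (Iic t)) s

lemma integral_conv_restrict_Ioc {E : Type*} [NormedAddCommGroup E] [NormedSpace ℝ E]
    [SFinite μ] (hab : a ≤ b) {f : ℝ → E} (hf : Integrable f (μ ∗ volume.restrict (Ioc a b))) :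
    ∫ x, f x ∂(μ ∗ volume.restrict (Ioc a b)) = ∫ x, (∫ t in (x + a)..(x + b), f t) ∂μ := by
  rw [integral_conv hf]
  simp_rw [← intervalIntegral.integral_of_le hab, intervalIntegral.integral_comp_add_left]

end MeasureTheory

/-- `E^{γ(P̄)}[g(ξ)] = E^{P̄}[γ(g)(ξ)]` for measurable `g` of at most
linear growth and `P̄` with finite first moment. -/
theorem uima_expectation_swap (g : ℝ → ℝ) (hg : Measurable g) (C : ℝ)
    (hgrowth : ∀ s, |g s| ≤ C * (1 + |s|))
    (Pb P : Measure ℝ) [IsProbabilityMeasure Pb] [IsProbabilityMeasure P]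
    (hmom : Integrable (fun x : ℝ => x) Pb)
    (hF : ∀ s, (P (Set.Iic s)).toReal
      = ∫ t in (s - 1/2)..(s + 1/2), (Pb (Set.Iic t)).toReal) :
    (∫ x, g x ∂P) = ∫ x, (∫ t in (x - 1/2)..(x + 1/2), g t) ∂Pb := by
  have hhalf : -(1/2 : ℝ) ≤ 1/2 := by norm_num
  have hP : P = Pb ∗ volume.restrict (Ioc (-(1/2)) (1/2)) := Measure.ext_of_Iic _ _ fun s => by
    rw [← measureReal_eq_measureReal_iff, measureReal_conv_restrict_Ioc_Iic hhalf, measureReal_def,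
      hF, sub_neg_eq_add]
    rfl
  have hgP : Integrable g (Pb ∗ volume.restrict (Ioc (-(1/2)) (1/2))) :=
    .of_abs_le_mul_one_add_abs hg.aestronglyMeasurable hgrowth
      (integrable_id_conv hmom integrable_id_restrict_Ioc)
  rw [hP, integral_conv_restrict_Ioc hhalf hgP]
  simp only [sub_eq_add_neg]
end
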